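/- arXiv:1307.4659 — 4 statements merged into one kernel-verified Lean document; each statement's English description precedes it below -/
import Mathlib

section
/- Let V : ℝ≥0 × ℝⁿ → ℝ≥0 be continuously differentiable, α₁, α₂ ∈ K∞, a ∈ ℝ, c > 0, with α₁(‖x‖) ≥ V(t,x) ≥ α₂(‖x‖) + a for all (t,x), and suppose the derivative of V along solutions of ẋ = f(t,x) satisfies V̇(t,x) ≤ 0 whenever ‖x‖ ≥ c. Then the solutions of ẋ = f(t,x) are uniformly globally bounded: there exist γ ∈ K∞ and c' > 0 such that ‖x(t,t₀,x₀)‖ ≤ γ(‖x₀‖) + c' for all t ≥ t₀. -/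
open Filter Set

/-- A class `K∞` function: continuous, strictly increasing on `[0,∞)`,
zero at zero, and unbounded. -/
def ClassKInf (α : ℝ → ℝ) : Prop :=
  Continuous α ∧ StrictMonoOn α (Set.Ici 0) ∧ α 0 = 0 ∧ Tendsto α atTop atTop

/-!
Along a solution, `W(t) = V(t, x(t))` cannot increase while it exceeds `α₁ c`, since there
`‖x(t)‖ ≥ c`; hence `W(t) ≤ max (V(t₀, x₀)) (α₁ c) ≤ α₁ ‖x₀‖ + α₁ c`. The lower bound
`α₂ ‖x‖ + a ≤ V` then gives `‖x(t)‖ ≤ α₂⁻¹ (α₁ ‖x₀‖ + C)` with `C = max (α₁ c - a) 0`, and the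
weak triangle inequality `β (u + v) ≤ β (2u) + β (2v)` for monotone `β` splits this into
`γ ‖x₀‖ + c'` with `γ = α₂⁻¹ ∘ 2α₁`.
-/

namespace ClassKInf

variable {α β : ℝ → ℝ}

lemma monotoneOn (h : ClassKInf α) : MonotoneOn α (Ici 0) :=
  h.2.1.monotoneOn

lemma nonneg (h : ClassKInf α) {s : ℝ} (hs : 0 ≤ s) : 0 ≤ α s :=
  h.2.2.1 ▸ h.monotoneOn self_mem_Ici hs hs

lemma comp (hβ : ClassKInf β) (hα : ClassKInf α) : ClassKInf (β ∘ α) := by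
  obtain ⟨hβc, hβm, hβ0, hβt⟩ := hβ
  obtain ⟨hαc, hαm, hα0, hαt⟩ := hα
  refine ⟨hβc.comp hαc, fun s hs u hu hsu => ?_, by simp [hα0, hβ0], hβt.comp hαt⟩
  exact hβm (hα0 ▸ hαm.monotoneOn self_mem_Ici hs hs)
    (hα0 ▸ hαm.monotoneOn self_mem_Ici hu hu) (hαm hs hu hsu)

lemma const_mul (h : ClassKInf α) {k : ℝ} (hk : 0 < k) : ClassKInf fun s => k * α s := by
  obtain ⟨hc, hm, h0, ht⟩ := h
  exact ⟨continuous_const.mul hc, fun s hs u hu hsu => mul_lt_mul_of_pos_left (hm hs hu hsu) hk,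
    by simp [h0], (tendsto_const_mul_atTop_of_pos hk).mpr ht⟩

lemma map_add_le (h : ClassKInf β) {u v : ℝ} (hu : 0 ≤ u) (hv : 0 ≤ v) :
    β (u + v) ≤ β (2 * u) + β (2 * v) := by
  have hmono := h.monotoneOn
  rcases le_total u v with huv | hvu
  · have := hmono (mem_Ici.mpr (by linarith)) (mem_Ici.mpr (by linarith))
      (by linarith : u + v ≤ 2 * v)
    linarith [h.nonneg (by linarith : 0 ≤ 2 * u)]
  · have := hmono (mem_Ici.mpr (by linarith)) (mem_Ici.mpr (by linarith))
      (by linarith : u + v ≤ 2 * u)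
    linarith [h.nonneg (by linarith : 0 ≤ 2 * v)]

/-- The inverse of `α` is taken through its extension `s ↦ α (max s 0) + min s 0`,
an order automorphism of `ℝ`. -/
lemma exists_le_inverse (h : ClassKInf α) :
    ∃ β, ClassKInf β ∧ ∀ s y, 0 ≤ s → α s ≤ y → s ≤ β y := by
  obtain ⟨hc, hm, h0, ht⟩ := h
  set g : ℝ → ℝ := fun s => α (max s 0) + min s 0 with hg
  have hg_of_nonneg : ∀ s, 0 ≤ s → g s = α s := fun s hs => by simp [hg, hs]
  have hg_of_nonpos : ∀ s, s ≤ 0 → g s = s := fun s hs => by simp [hg, hs, h0]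
  have hg_mono : StrictMono g := by
    intro s u hsu
    rcases le_or_gt 0 s with hs | hs
    · rw [hg_of_nonneg s hs, hg_of_nonneg u (hs.trans hsu.le)]
      exact hm hs (hs.trans hsu.le) hsu
    · refine add_lt_add_of_le_of_lt ?_ (lt_min ((min_eq_left hs.le).trans_lt hsu) ?_)
      · exact hm.monotoneOn (le_max_right s 0) (le_max_right u 0) (max_le_max_right 0 hsu.le)
      · simpa [min_eq_left hs.le] using hs
  have hg_surj : Function.Surjective g := by
    refine Continuous.surjective (by fun_prop) ?_ ?_
    · exact ht.congr' ((eventually_ge_atTop 0).mono fun s hs => (hg_of_nonneg s hs).symm)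
    · exact tendsto_id.congr' ((eventually_le_atBot 0).mono fun s hs => (hg_of_nonpos s hs).symm)
  set e := hg_mono.orderIsoOfSurjective g hg_surj
  have he : ⇑e = g := hg_mono.coe_orderIsoOfSurjective g hg_surj
  refine ⟨e.symm, ⟨e.symm.continuous, e.symm.strictMono.strictMonoOn _, ?_,
    e.symm.tendsto_atTop⟩, fun s y hs hsy => ?_⟩
  · rw [e.symm_apply_eq, he, hg_of_nonneg 0 le_rfl, h0]
  · rwa [e.le_symm_apply, he, hg_of_nonneg s hs]

end ClassKInf

lemma le_max_of_deriv_nonpos_of_lt {W : ℝ → ℝ} {t₀ t K : ℝ} (ht : t₀ ≤ t)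
    (hdiff : ∀ s ∈ Icc t₀ t, DifferentiableAt ℝ W s)
    (hderiv : ∀ s ∈ Ico t₀ t, K < W s → deriv W s ≤ 0) :
    W t ≤ max (W t₀) K := by
  refine le_of_forall_pos_le_add fun η hη => ?_
  -- `W` can touch the barrier `max (W t₀) K + ε + ε (s - t₀)` only where `W > K`.
  set ε := η / (t - t₀ + 1)
  have hε : 0 < ε := div_pos hη (by linarith)
  have hεη : ε * (t - t₀ + 1) = η := div_mul_cancel₀ η (by linarith)
  have hfence := image_le_of_deriv_right_lt_deriv_boundary (f := W) (a := t₀) (b := t)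
    (B := fun x => max (W t₀) K + ε + ε * (x - t₀)) (B' := fun _ => ε)
    (fun s hs => (hdiff s hs).continuousAt.continuousWithinAt)
    (fun s hs => (hdiff s (Ico_subset_Icc_self hs)).hasDerivAt.hasDerivWithinAt)
    (by linarith [le_max_left (W t₀) K])
    (fun x => ((hasDerivAt_id x).sub_const t₀ |>.const_mul ε |>.const_add _).congr_deriv
      (mul_one ε))
    (fun s hs hWB => (hderiv s hs (by
      have := mul_nonneg hε.le (sub_nonneg.mpr hs.1)
      linarith [le_max_right (W t₀) K])).trans_lt hε)
    ⟨ht, le_rfl⟩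
  linarith

theorem stmt_0_general {n : ℕ}
    (f : ℝ → EuclideanSpace ℝ (Fin n) → EuclideanSpace ℝ (Fin n))
    (sol : ℝ → EuclideanSpace ℝ (Fin n) → ℝ → EuclideanSpace ℝ (Fin n))
    (hinit : ∀ t₀ x₀, sol t₀ x₀ t₀ = x₀)
    (hode : ∀ t₀ x₀ t, t₀ ≤ t → HasDerivAt (sol t₀ x₀) (f t (sol t₀ x₀ t)) t)
    (V : ℝ → EuclideanSpace ℝ (Fin n) → ℝ)
    (hVsmooth : ContDiff ℝ 1 fun p : ℝ × EuclideanSpace ℝ (Fin n) => V p.1 p.2)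
    (α₁ α₂ : ℝ → ℝ) (a c : ℝ) (hc : 0 < c)
    (hα₁ : ClassKInf α₁) (hα₂ : ClassKInf α₂)
    (hbound : ∀ t x, α₂ ‖x‖ + a ≤ V t x ∧ V t x ≤ α₁ ‖x‖)
    (hdecr : ∀ t₀ x₀ t, t₀ ≤ t → c ≤ ‖sol t₀ x₀ t‖ →
      deriv (fun s => V s (sol t₀ x₀ s)) t ≤ 0) :
    ∃ γ c', ClassKInf γ ∧ 0 < c' ∧
      ∀ t₀ x₀, 0 ≤ t₀ → ∀ t, t₀ ≤ t → ‖sol t₀ x₀ t‖ ≤ γ ‖x₀‖ + c' := by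
  obtain ⟨β, hβ, hβ_inv⟩ := hα₂.exists_le_inverse
  set C := max (α₁ c - a) 0
  refine ⟨β ∘ fun r => 2 * α₁ r, β (2 * C) + 1, hβ.comp (hα₁.const_mul two_pos),
    by linarith [hβ.nonneg (by positivity : 0 ≤ 2 * C)], fun t₀ x₀ _ t ht => ?_⟩
  have hdiff : ∀ s, t₀ ≤ s → DifferentiableAt ℝ (fun s => V s (sol t₀ x₀ s)) s := fun s hs =>
    (hVsmooth.differentiable one_ne_zero).differentiableAt.comp s
      (differentiableAt_id.prodMk (hode t₀ x₀ s hs).differentiableAt)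
  have hnorm_ge : ∀ s, α₁ c < V s (sol t₀ x₀ s) → c ≤ ‖sol t₀ x₀ s‖ := fun s hlt => by
    by_contra! hsmall
    have := hα₁.monotoneOn (norm_nonneg _) hc.le hsmall.le
    linarith [(hbound s (sol t₀ x₀ s)).2]
  have hV_le : V t (sol t₀ x₀ t) ≤ max (V t₀ x₀) (α₁ c) := by
    simpa [hinit] using le_max_of_deriv_nonpos_of_lt ht (fun s hs => hdiff s hs.1)
      fun s hs hlt => hdecr t₀ x₀ s hs.1 (hnorm_ge s hlt)
  have hα₂_le : α₂ ‖sol t₀ x₀ t‖ ≤ α₁ ‖x₀‖ + C := by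
    have hC : α₁ c - a ≤ C := le_max_left _ _
    have hC₀ : 0 ≤ C := le_max_right _ _
    have : max (V t₀ x₀) (α₁ c) ≤ α₁ ‖x₀‖ + C + a :=
      max_le (by linarith [(hbound t₀ x₀).2, hα₁.nonneg hc.le])
        (by linarith [hα₁.nonneg (norm_nonneg x₀)])
    linarith [(hbound t (sol t₀ x₀ t)).1]
  calc ‖sol t₀ x₀ t‖ ≤ β (α₁ ‖x₀‖ + C) := hβ_inv _ _ (norm_nonneg _) hα₂_le
    _ ≤ β (2 * α₁ ‖x₀‖) + β (2 * C) := hβ.map_add_le (hα₁.nonneg (norm_nonneg _)) (le_max_right _ _)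
    _ ≤ _ := by simp only [Function.comp_apply]; linarith

/-- Uniform global boundedness from a Lyapunov-like function whose derivative
along solutions is nonpositive outside the ball of radius `c`. -/
theorem stmt_0 {n : ℕ}
    (f : ℝ → EuclideanSpace ℝ (Fin n) → EuclideanSpace ℝ (Fin n))
    (hf0 : ∀ t, f t 0 = 0)
    (sol : ℝ → EuclideanSpace ℝ (Fin n) → ℝ → EuclideanSpace ℝ (Fin n))
    (hinit : ∀ t₀ x₀, sol t₀ x₀ t₀ = x₀)
    (hode : ∀ t₀ x₀ t, t₀ ≤ t → HasDerivAt (sol t₀ x₀) (f t (sol t₀ x₀ t)) t)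
    (V : ℝ → EuclideanSpace ℝ (Fin n) → ℝ)
    (hVnonneg : ∀ t x, 0 ≤ V t x)
    (hVsmooth : ContDiff ℝ 1 fun p : ℝ × EuclideanSpace ℝ (Fin n) => V p.1 p.2)
    (α₁ α₂ : ℝ → ℝ) (a c : ℝ) (hc : 0 < c)
    (hα₁ : ClassKInf α₁) (hα₂ : ClassKInf α₂)
    (hbound : ∀ t x, α₂ ‖x‖ + a ≤ V t x ∧ V t x ≤ α₁ ‖x‖)
    (hdecr : ∀ t₀ x₀ t, t₀ ≤ t → c ≤ ‖sol t₀ x₀ t‖ →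
      deriv (fun s => V s (sol t₀ x₀ s)) t ≤ 0) :
    ∃ γ c', ClassKInf γ ∧ 0 < c' ∧
      ∀ t₀ x₀, 0 ≤ t₀ → ∀ t, t₀ ≤ t → ‖sol t₀ x₀ t‖ ≤ γ ‖x₀‖ + c' :=
  stmt_0_general f sol hinit hode V hVsmooth α₁ α₂ a c hc hα₁ hα₂ hbound hdecr
end

section
/- Let D(q) be symmetric with d_m·I ≤ D(q) ≤ d_M·I, and let ε₁, ε₂, k_p, k_d, b > 0 satisfy k_p/(4 d_M) ≥ ε₁² and k_d/(4 b d_M) ≥ ε₂². Define V(t,x) = ½ q̃'ᵀ D q̃' + ½ k_p‖q̃‖² + (k_d/(2b))‖ϑ‖² + (ε₁ q̃ − ε₂ ϑ)ᵀ D q̃'. Then V(t,x) ≥ ¼ [q̃; q̃']ᵀ M₁ [q̃; q̃'] + ¼ [ϑ; q̃']ᵀ M₂ [ϑ; q̃'] where M₁ = [[k_p I, 2ε₁ D],[2ε₁ Dᵀ, D]] and M₂ = [[ (k_d/b) I, −2ε₂ D],[−2ε₂ Dᵀ, D]], and both M₁ and M₂ are positive semidefinite. In particular V is positive definite and radially unbounded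 in x = (q̃, q̃', ϑ). -/
/-!
Both block matrices have the form `[[α I, c D], [c D, D]]`, whose quadratic form is
`⟪cu + v, D(cu + v)⟫ + α|u|² - c²⟪u, Du⟫ ≥ (α - c² d_M)|u|² ≥ 0`; the gain conditions say exactly
`c² d_M ≤ α`. The cross terms of `V` are those of these two forms, so `V` is a quarter of each
plus the leftover `(k_p/4)|q̃|² + (k_d/4b)|ϑ|²`. Evaluating the forms also at `(2q̃, q̃')` and
`(2ϑ, q̃')` bounds `V` below by `(k_p/8)|q̃|² + (d_m/8)|q̃'|² + (k_d/8b)|ϑ|²`, which gives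
positive definiteness and radial unboundedness.
-/

open Matrix

lemma dotProduct_self_nonneg {ι R : Type*} [Fintype ι] [Ring R] [LinearOrder R]
    [IsStrictOrderedRing R] (v : ι → R) : 0 ≤ v ⬝ᵥ v :=
  Finset.sum_nonneg fun i _ => mul_self_nonneg (v i)

lemma nonneg_and_eq_zero_of_mul_dotProduct_self_add_add_le {ι : Type*} [Fintype ι] {κ V : ℝ}
    {u v w : ι → ℝ} (hκ : 0 < κ) (h : κ * (u ⬝ᵥ u + v ⬝ᵥ v + w ⬝ᵥ w) ≤ V) :
    0 ≤ V ∧ (V = 0 → u = 0 ∧ v = 0 ∧ w = 0) := by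
  have hu := dotProduct_self_nonneg u
  have hv := dotProduct_self_nonneg v
  have hw := dotProduct_self_nonneg w
  refine ⟨(mul_nonneg hκ.le (by linarith)).trans h, fun hV => ?_⟩
  have hsum := nonpos_of_mul_nonpos_right (hV ▸ h) hκ
  simp only [← dotProduct_self_eq_zero (v := u), ← dotProduct_self_eq_zero (v := v),
    ← dotProduct_self_eq_zero (v := w)]
  exact ⟨by linarith, by linarith, by linarith⟩

lemma min_min_mul_add_add_le {a b c x y z : ℝ} (hx : 0 ≤ x) (hy : 0 ≤ y) (hz : 0 ≤ z) :
    min a (min b c) * (x + y + z) ≤ a * x + b * y + c * z := by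
  have : min a (min b c) * x ≤ a * x := by gcongr; exact min_le_left _ _
  have : min a (min b c) * y ≤ b * y := by gcongr; exact (min_le_right _ _).trans (min_le_left _ _)
  have : min a (min b c) * z ≤ c * z := by gcongr; exact (min_le_right _ _).trans (min_le_right _ _)
  linarith

namespace Matrix

variable {ι : Type*} [Fintype ι]

lemma dotProduct_mulVec_comm_of_isSymm {D : Matrix ι ι ℝ} (hD : D.IsSymm) (u v : ι → ℝ) :
    u ⬝ᵥ D *ᵥ v = v ⬝ᵥ D *ᵥ u := by
  rw [← dotProduct_transpose_mulVec, hD.eq]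

def blockForm (D : Matrix ι ι ℝ) (α c : ℝ) (u v : ι → ℝ) : ℝ :=
  α * (u ⬝ᵥ u) + 2 * c * (u ⬝ᵥ D *ᵥ v) + v ⬝ᵥ D *ᵥ v

variable {D : Matrix ι ι ℝ} {dm dM α β c d : ℝ}

lemma blockForm_nonneg (hsym : D.IsSymm) (hpos : ∀ w, 0 ≤ w ⬝ᵥ D *ᵥ w)
    (hle : ∀ u, u ⬝ᵥ D *ᵥ u ≤ dM * (u ⬝ᵥ u)) (hα : c ^ 2 * dM ≤ α) (u v : ι → ℝ) :
    0 ≤ blockForm D α c u v := by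
  have hsq : (c • u + v) ⬝ᵥ D *ᵥ (c • u + v) =
      c ^ 2 * (u ⬝ᵥ D *ᵥ u) + 2 * c * (u ⬝ᵥ D *ᵥ v) + v ⬝ᵥ D *ᵥ v := by
    simp only [mulVec_add, mulVec_smul, dotProduct_add, add_dotProduct, dotProduct_smul,
      smul_dotProduct, smul_eq_mul]
    linear_combination c * dotProduct_mulVec_comm_of_isSymm hsym v u
  have hu : c ^ 2 * (u ⬝ᵥ D *ᵥ u) ≤ α * (u ⬝ᵥ u) :=
    calc c ^ 2 * (u ⬝ᵥ D *ᵥ u) ≤ c ^ 2 * (dM * (u ⬝ᵥ u)) := by gcongr; exact hle u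
      _ = c ^ 2 * dM * (u ⬝ᵥ u) := by ring
      _ ≤ α * (u ⬝ᵥ u) := by gcongr; exact dotProduct_self_nonneg u
  rw [blockForm]
  linarith [hpos (c • u + v)]

lemma min_mul_dotProduct_self_add_add_le (hge : ∀ v, dm * (v ⬝ᵥ v) ≤ v ⬝ᵥ D *ᵥ v)
    (hα : ∀ u v, 0 ≤ blockForm D α c u v) (hβ : ∀ w v, 0 ≤ blockForm D β d w v)
    (u v w : ι → ℝ) :
    min (α / 8) (min (dm / 8) (β / 8)) * (u ⬝ᵥ u + v ⬝ᵥ v + w ⬝ᵥ w) ≤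
      blockForm D α c u v / 4 + blockForm D β d w v / 4 + α / 4 * (u ⬝ᵥ u) +
        β / 4 * (w ⬝ᵥ w) := by
  have h₁ := hα u v
  have h₂ := hβ w v
  have h₁' := hα ((2 : ℝ) • u) v
  have h₂' := hβ ((2 : ℝ) • w) v
  refine (min_min_mul_add_add_le (dotProduct_self_nonneg u) (dotProduct_self_nonneg v)
    (dotProduct_self_nonneg w)).trans ?_
  simp only [blockForm, smul_dotProduct, dotProduct_smul, smul_eq_mul] at h₁ h₂ h₁' h₂' ⊢
  linarith [hge v]

variable [DecidableEq ι]

lemma sumElim_dotProduct_fromBlocks_mulVec_sumElim (D : Matrix ι ι ℝ) (α c : ℝ) (u v : ι → ℝ) :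
    Sum.elim u v ⬝ᵥ fromBlocks (α • (1 : Matrix ι ι ℝ)) (c • D) (c • Dᵀ) D *ᵥ Sum.elim u v =
      blockForm D α c u v := by
  simp only [fromBlocks_mulVec, Sum.elim_comp_inl, Sum.elim_comp_inr, sumElim_dotProduct_sumElim,
    dotProduct_add, smul_mulVec, one_mulVec, dotProduct_smul, smul_eq_mul,
    dotProduct_transpose_mulVec, blockForm]
  ring

lemma posSemidef_fromBlocks_smul_one (hsym : D.IsSymm) (hpos : ∀ w, 0 ≤ w ⬝ᵥ D *ᵥ w)
    (hle : ∀ u, u ⬝ᵥ D *ᵥ u ≤ dM * (u ⬝ᵥ u)) (hα : c ^ 2 * dM ≤ α) :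
    (fromBlocks (α • (1 : Matrix ι ι ℝ)) (c • D) (c • Dᵀ) D).PosSemidef := by
  refine .of_dotProduct_mulVec_nonneg ?_ fun x => ?_
  · refine IsHermitian.fromBlocks ?_ ?_ hsym
    · simp
    · simp [conjTranspose_eq_transpose_of_trivial]
  · rw [star_trivial, ← Sum.elim_comp_inl_inr x, sumElim_dotProduct_fromBlocks_mulVec_sumElim]
    exact blockForm_nonneg hsym hpos hle hα _ _

end Matrix

theorem stmt_5_general {n : ℕ}
    (dm dM e1 e2 kp kd b : ℝ)
    (hdm : 0 < dm) (hdmM : dm ≤ dM)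
    (hkp : 0 < kp) (hkd : 0 < kd) (hb : 0 < b)
    (h1 : e1 ^ 2 ≤ kp / (4 * dM)) (h2 : e2 ^ 2 ≤ kd / (4 * b * dM))
    (D : ℝ → Matrix (Fin n) (Fin n) ℝ)
    (hsym : ∀ t, (D t).IsSymm)
    (hD : ∀ t v, dm * (v ⬝ᵥ v) ≤ v ⬝ᵥ (D t).mulVec v ∧
      v ⬝ᵥ (D t).mulVec v ≤ dM * (v ⬝ᵥ v))
    (V : ℝ → (Fin n → ℝ) → (Fin n → ℝ) → (Fin n → ℝ) → ℝ)
    (hV : ∀ t q q' th, V t q q' th =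
      (1/2) * (q' ⬝ᵥ (D t).mulVec q') + (1/2) * kp * (q ⬝ᵥ q) + kd / (2*b) * (th ⬝ᵥ th)
        + (e1 • q - e2 • th) ⬝ᵥ (D t).mulVec q') :
    (∀ t, (Matrix.fromBlocks (kp • (1 : Matrix (Fin n) (Fin n) ℝ)) ((2*e1) • D t)
            ((2*e1) • (D t)ᵀ) (D t)).PosSemidef) ∧
    (∀ t, (Matrix.fromBlocks ((kd/b) • (1 : Matrix (Fin n) (Fin n) ℝ)) ((-(2*e2)) • D t)
            ((-(2*e2)) • (D t)ᵀ) (D t)).PosSemidef) ∧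
    (∀ t q q' th,
      (1/4) * (Sum.elim q q' ⬝ᵥ (Matrix.fromBlocks (kp • (1 : Matrix (Fin n) (Fin n) ℝ))
          ((2*e1) • D t) ((2*e1) • (D t)ᵀ) (D t)).mulVec (Sum.elim q q'))
        + (1/4) * (Sum.elim th q' ⬝ᵥ (Matrix.fromBlocks ((kd/b) • (1 : Matrix (Fin n) (Fin n) ℝ))
          ((-(2*e2)) • D t) ((-(2*e2)) • (D t)ᵀ) (D t)).mulVec (Sum.elim th q'))
      ≤ V t q q' th) ∧
    (∀ t q q' th, 0 ≤ V t q q' th ∧ (V t q q' th = 0 → q = 0 ∧ q' = 0 ∧ th = 0)) ∧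
    (∀ M : ℝ, ∃ R : ℝ, ∀ t q q' th,
      R ≤ q ⬝ᵥ q + q' ⬝ᵥ q' + th ⬝ᵥ th → M ≤ V t q q' th) := by
  have hdM : 0 < dM := hdm.trans_le hdmM
  have hα₁ : (2 * e1) ^ 2 * dM ≤ kp := by rw [le_div_iff₀ (by positivity)] at h1; linarith
  have hα₂ : (-(2 * e2)) ^ 2 * dM ≤ kd / b := by
    rw [le_div_iff₀ (by positivity)] at h2; rw [le_div_iff₀ hb]; linarith
  have hge t v := (hD t v).1
  have hle t u := (hD t u).2
  have hpos t w : 0 ≤ w ⬝ᵥ D t *ᵥ w := (mul_nonneg hdm.le (dotProduct_self_nonneg w)).trans (hge t w)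
  have hVQ t q q' th : V t q q' th = blockForm (D t) kp (2 * e1) q q' / 4 +
      blockForm (D t) (kd / b) (-(2 * e2)) th q' / 4 + kp / 4 * (q ⬝ᵥ q) +
        kd / b / 4 * (th ⬝ᵥ th) := by
    rw [hV, blockForm, blockForm]
    simp only [sub_dotProduct, smul_dotProduct, smul_eq_mul]
    ring
  set κ := min (kp / 8) (min (dm / 8) (kd / b / 8))
  have hκ : 0 < κ := by positivity
  have hκV t q q' th : κ * (q ⬝ᵥ q + q' ⬝ᵥ q' + th ⬝ᵥ th) ≤ V t q q' th := by
    rw [hVQ]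
    exact min_mul_dotProduct_self_add_add_le (hge t) (blockForm_nonneg (hsym t) (hpos t) (hle t) hα₁)
      (blockForm_nonneg (hsym t) (hpos t) (hle t) hα₂) q q' th
  refine ⟨fun t => posSemidef_fromBlocks_smul_one (hsym t) (hpos t) (hle t) hα₁,
    fun t => posSemidef_fromBlocks_smul_one (hsym t) (hpos t) (hle t) hα₂,
    fun t q q' th => ?_,
    fun t q q' th => nonneg_and_eq_zero_of_mul_dotProduct_self_add_add_le hκ (hκV t q q' th),
    fun M => ⟨M / κ, fun t q q' th hR => ?_⟩⟩
  · rw [sumElim_dotProduct_fromBlocks_mulVec_sumElim, sumElim_dotProduct_fromBlocks_mulVec_sumElim,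
      hVQ]
    have := mul_nonneg hkp.le (dotProduct_self_nonneg q)
    have := mul_nonneg (div_pos hkd hb).le (dotProduct_self_nonneg th)
    linarith
  · calc M = κ * (M / κ) := by field_simp
      _ ≤ κ * (q ⬝ᵥ q + q' ⬝ᵥ q' + th ⬝ᵥ th) := by gcongr
      _ ≤ V t q q' th := hκV t q q' th

/-- Positivity of the cross-term-augmented Lyapunov function: block lower bound via the
positive semidefinite matrices `M₁`, `M₂`, positive definiteness and radial unboundedness. -/
theorem stmt_5 {n : ℕ}
    (dm dM e1 e2 kp kd b : ℝ)
    (hdm : 0 < dm) (hdmM : dm ≤ dM)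
    (he1 : 0 < e1) (he2 : 0 < e2) (hkp : 0 < kp) (hkd : 0 < kd) (hb : 0 < b)
    (h1 : e1 ^ 2 ≤ kp / (4 * dM)) (h2 : e2 ^ 2 ≤ kd / (4 * b * dM))
    (D : ℝ → Matrix (Fin n) (Fin n) ℝ)
    (hsym : ∀ t, (D t).IsSymm)
    (hD : ∀ t v, dm * (v ⬝ᵥ v) ≤ v ⬝ᵥ (D t).mulVec v ∧
      v ⬝ᵥ (D t).mulVec v ≤ dM * (v ⬝ᵥ v))
    (V : ℝ → (Fin n → ℝ) → (Fin n → ℝ) → (Fin n → ℝ) → ℝ)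
    (hV : ∀ t q q' th, V t q q' th =
      (1/2) * (q' ⬝ᵥ (D t).mulVec q') + (1/2) * kp * (q ⬝ᵥ q) + kd / (2*b) * (th ⬝ᵥ th)
        + (e1 • q - e2 • th) ⬝ᵥ (D t).mulVec q') :
    (∀ t, (Matrix.fromBlocks (kp • (1 : Matrix (Fin n) (Fin n) ℝ)) ((2*e1) • D t)
            ((2*e1) • (D t)ᵀ) (D t)).PosSemidef) ∧
    (∀ t, (Matrix.fromBlocks ((kd/b) • (1 : Matrix (Fin n) (Fin n) ℝ)) ((-(2*e2)) • D t)
            ((-(2*e2)) • (D t)ᵀ) (D t)).PosSemidef) ∧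
    (∀ t q q' th,
      (1/4) * (Sum.elim q q' ⬝ᵥ (Matrix.fromBlocks (kp • (1 : Matrix (Fin n) (Fin n) ℝ))
          ((2*e1) • D t) ((2*e1) • (D t)ᵀ) (D t)).mulVec (Sum.elim q q'))
        + (1/4) * (Sum.elim th q' ⬝ᵥ (Matrix.fromBlocks ((kd/b) • (1 : Matrix (Fin n) (Fin n) ℝ))
          ((-(2*e2)) • D t) ((-(2*e2)) • (D t)ᵀ) (D t)).mulVec (Sum.elim th q'))
      ≤ V t q q' th) ∧
    (∀ t q q' th, 0 ≤ V t q q' th ∧ (V t q q' th = 0 → q = 0 ∧ q' = 0 ∧ th = 0)) ∧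
    (∀ M : ℝ, ∃ R : ℝ, ∀ t q q' th,
      R ≤ q ⬝ᵥ q + q' ⬝ᵥ q' + th ⬝ᵥ th → M ≤ V t q q' th) :=
  stmt_5_general dm dM e1 e2 kp kd b hdm hdmM hkp hkd hb h1 h2 D hsym hD V hV
end

section
/- Let A ∈ ℝⁿˣⁿ be symmetric with d_m·I ≤ A ≤ d_M·I (0 < d_m ≤ d_M), and ε > 0 with α/(4 d_M) ≥ ε². Then the block matrix [[α·I, 2ε·A],[2ε·Aᵀ, A]] ∈ ℝ²ⁿˣ²ⁿ is positive semidefinite. -/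
/-!
Since `A ≥ d_m I > 0`, the block matrix is positive semidefinite iff its Schur complement
with respect to `A` is. That complement is `αI - (2ε)² A A⁻¹ A = αI - 4ε² A`, which splits as
`(α - 4ε² d_M) I + 4ε² (d_M I - A)`, a sum of two positive semidefinite matrices because
`4ε² d_M ≤ α` and `A ≤ d_M I`.
-/

open Matrix

namespace Matrix

variable {m : Type*} [DecidableEq m]

theorem PosSemidef.posDef_of_sub_smul_one {A : Matrix m m ℝ} {d : ℝ}
    (hA : (A - d • (1 : Matrix m m ℝ)).PosSemidef) (hd : 0 < d) : A.PosDef := by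
  simpa using PosDef.posSemidef_add hA (PosDef.one.smul hd)

theorem posSemidef_fromBlocks_smul_one_of_le_smul_one [Fintype m] {A : Matrix m m ℝ}
    (hA : A.PosDef) {a c d : ℝ}
    (hAd : (d • (1 : Matrix m m ℝ) - A).PosSemidef) (hcd : c ^ 2 * d ≤ a) :
    (fromBlocks (a • (1 : Matrix m m ℝ)) (c • A) (c • A)ᴴ A).PosSemidef := by
  have : Invertible A := hA.isUnit.invertible
  rw [PosDef.fromBlocks₂₂ _ _ hA]
  have schur : a • (1 : Matrix m m ℝ) - c • A * A⁻¹ * (c • A)ᴴ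
      = (a - c ^ 2 * d) • (1 : Matrix m m ℝ) + c ^ 2 • (d • (1 : Matrix m m ℝ) - A) := by
    simp only [conjTranspose_smul, hA.isHermitian.eq, star_trivial, Matrix.smul_mul,
      Matrix.mul_smul, mul_inv_of_invertible, one_mul, smul_smul]
    module
  rw [schur]
  exact (PosSemidef.one.smul (sub_nonneg.mpr hcd)).add (hAd.smul (sq_nonneg c))

end Matrix

theorem stmt_6_general {n : ℕ} (A : Matrix (Fin n) (Fin n) ℝ) (dm dM e a : ℝ)
    (hdm : 0 < dm) (hdmM : dm ≤ dM)
    (hlow : (A - dm • (1 : Matrix (Fin n) (Fin n) ℝ)).PosSemidef)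
    (hhigh : (dM • (1 : Matrix (Fin n) (Fin n) ℝ) - A).PosSemidef)
    (hcond : e ^ 2 ≤ a / (4 * dM)) :
    (Matrix.fromBlocks (a • (1 : Matrix (Fin n) (Fin n) ℝ)) ((2*e) • A)
      ((2*e) • Aᵀ) A).PosSemidef := by
  have hdM : 0 < dM := hdm.trans_le hdmM
  have hcd : (2 * e) ^ 2 * dM ≤ a := by
    rw [le_div_iff₀ (by positivity)] at hcond
    linarith
  have hconj : ((2 * e) • A)ᴴ = (2 * e) • Aᵀ := by
    rw [conjTranspose_smul, star_trivial, conjTranspose_eq_transpose_of_trivial]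
  rw [← hconj]
  exact posSemidef_fromBlocks_smul_one_of_le_smul_one (hlow.posDef_of_sub_smul_one hdm) hhigh hcd

/-- Key block-matrix lemma: for symmetric `A` with `d_m·I ≤ A ≤ d_M·I` and
`α/(4 d_M) ≥ ε²`, the block matrix `[[α·I, 2ε·A],[2ε·Aᵀ, A]]` is positive semidefinite. -/
theorem stmt_6 {n : ℕ} (A : Matrix (Fin n) (Fin n) ℝ) (dm dM e a : ℝ)
    (hdm : 0 < dm) (hdmM : dm ≤ dM) (he : 0 < e) (ha : 0 < a)
    (hsym : A.IsSymm)
    (hlow : (A - dm • (1 : Matrix (Fin n) (Fin n) ℝ)).PosSemidef)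
    (hhigh : (dM • (1 : Matrix (Fin n) (Fin n) ℝ) - A).PosSemidef)
    (hcond : e ^ 2 ≤ a / (4 * dM)) :
    (Matrix.fromBlocks (a • (1 : Matrix (Fin n) (Fin n) ℝ)) ((2*e) • A)
      ((2*e) • Aᵀ) A).PosSemidef :=
  stmt_6_general A dm dM e a hdm hdmM hlow hhigh hcond
end

section
/- Let ϑ solve ϑ̇ = −a ϑ + ν(t) on [t₀, T), where ν : [t₀,T) → ℝⁿ is bounded and uniformly continuous and a > 0. Then for every τ ∈ (t₀, T) and every Δ > 0 there exists a* > 0 (depending only on Δ and the modulus of continuity and bound of ν) such that if a ≥ a*, then ‖ϑ̇(t)‖ ≤ Δ for all t ∈ [τ, T). In other words, ϑ̇(t) → 0 as a → ∞, uniformly on [τ, T). -/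
/-!
Variation of constants gives
`-a ϑ(t) + ν(t) = ∫_{t₀}^t a e^{-a(t-s)} (ν(t) - ν(s)) ds + e^{-a(t-t₀)} (ν(t) - a ϑ(t₀))`.
The kernel `a e^{-a(t-s)}` is a probability density on `(-∞, t]` concentrating at `s = t` as
`a → ∞`: on `[t - δ, t]` uniform continuity makes `ν(t) - ν(s)` small, while the mass of the
kernel on `[t₀, t - δ]` and the boundary term are `O(a e^{-aδ})`.
-/

open MeasureTheory Set Filter Topology Real

section Kernel

variable {E : Type*} [NormedAddCommGroup E] [NormedSpace ℝ E]

lemma hasDerivAt_exp_mul_sub (a t s : ℝ) :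
    HasDerivAt (fun s => exp (a * (s - t))) (a * exp (a * (s - t))) s := by
  simpa [mul_comm] using (((hasDerivAt_id s).sub_const t).const_mul a).exp

lemma integral_mul_exp_mul_sub (a t c d : ℝ) :
    ∫ s in c..d, a * exp (a * (s - t)) = exp (a * (d - t)) - exp (a * (c - t)) :=
  intervalIntegral.integral_eq_sub_of_hasDerivAt (fun s _ => hasDerivAt_exp_mul_sub a t s)
    ((by fun_prop : Continuous fun s => a * exp (a * (s - t))).intervalIntegrable _ _)

lemma norm_integral_exp_kernel_smul_le {h : ℝ → E} {a t c d C : ℝ} (ha : 0 ≤ a) (hcd : c ≤ d)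
    (hC : ∀ s ∈ Icc c d, ‖h s‖ ≤ C) :
    ‖∫ s in c..d, (a * exp (a * (s - t))) • h s‖
      ≤ (exp (a * (d - t)) - exp (a * (c - t))) * C := by
  calc _ ≤ ∫ s in c..d, a * exp (a * (s - t)) * C := by
        refine intervalIntegral.norm_integral_le_of_norm_le hcd (ae_of_all _ fun s hs => ?_)
          ((by fun_prop : Continuous fun s => a * exp (a * (s - t)) * C).intervalIntegrable _ _)
        rw [norm_smul, Real.norm_of_nonneg (by positivity)]
        exact mul_le_mul_of_nonneg_left (hC s (Ioc_subset_Icc_self hs)) (by positivity)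
    _ = _ := by rw [intervalIntegral.integral_mul_const, integral_mul_exp_mul_sub]

lemma norm_integral_exp_kernel_smul_le_of_split {h : ℝ → E} {a c m t C ε : ℝ} (ha : 0 ≤ a)
    (hcm : c ≤ m) (hmt : m ≤ t) (hh : IntervalIntegrable h volume c t)
    (hfar : ∀ s ∈ Icc c m, ‖h s‖ ≤ C) (hnear : ∀ s ∈ Icc m t, ‖h s‖ ≤ ε) :
    ‖∫ s in c..t, (a * exp (a * (s - t))) • h s‖ ≤ C * exp (a * (m - t)) + ε := by
  have hC : 0 ≤ C := (norm_nonneg _).trans (hfar c ⟨le_rfl, hcm⟩)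
  have hε : 0 ≤ ε := (norm_nonneg _).trans (hnear t ⟨hmt, le_rfl⟩)
  have hk : IntervalIntegrable (fun s => (a * exp (a * (s - t))) • h s) volume c t :=
    hh.continuousOn_smul (by fun_prop)
  have hm : m ∈ uIcc c t := by rw [uIcc_of_le (hcm.trans hmt)]; exact ⟨hcm, hmt⟩
  rw [← intervalIntegral.integral_add_adjacent_intervals
    (hk.mono_set (uIcc_subset_uIcc left_mem_uIcc hm))
    (hk.mono_set (uIcc_subset_uIcc hm right_mem_uIcc))]
  calc _ ≤ _ := norm_add_le _ _
    _ ≤ (exp (a * (m - t)) - exp (a * (c - t))) * C + (exp (a * (t - t)) - exp (a * (m - t))) * ε :=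
        add_le_add (norm_integral_exp_kernel_smul_le ha hcm hfar)
          (norm_integral_exp_kernel_smul_le ha hmt hnear)
    _ ≤ _ := by
        rw [sub_self, mul_zero, exp_zero]
        nlinarith [exp_pos (a * (c - t)), exp_pos (a * (m - t))]

end Kernel

section LinearODE

variable {E : Type*} [NormedAddCommGroup E] [NormedSpace ℝ E] [CompleteSpace E]

lemma integral_exp_smul_eq_of_hasDerivAt {f g : ℝ → E} {a t₀ t : ℝ}
    (hf : ∀ s ∈ uIcc t₀ t, HasDerivAt f (-a • f s + g s) s)
    (hg : IntervalIntegrable g volume t₀ t) :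
    ∫ s in t₀..t, exp (a * (s - t)) • g s = f t - exp (a * (t₀ - t)) • f t₀ := by
  have hD := intervalIntegral.integral_eq_sub_of_hasDerivAt
    (f := fun s => exp (a * (s - t)) • f s) (fun s hs => ?_)
    (hg.continuousOn_smul (f := fun s => exp (a * (s - t))) (by fun_prop))
  · simpa using hD
  exact ((hasDerivAt_exp_mul_sub a t s).smul (hf s hs)).congr_deriv (by module)

theorem neg_smul_add_eq_integral_add {f g : ℝ → E} {a t₀ t : ℝ}
    (hf : ∀ s ∈ uIcc t₀ t, HasDerivAt f (-a • f s + g s) s)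
    (hg : IntervalIntegrable g volume t₀ t) :
    -a • f t + g t = (∫ s in t₀..t, (a * exp (a * (s - t))) • (g t - g s))
      + exp (a * (t₀ - t)) • (g t - a • f t₀) := by
  have hconst : ∫ s in t₀..t, (a * exp (a * (s - t))) • g t = (1 - exp (a * (t₀ - t))) • g t := by
    rw [intervalIntegral.integral_smul_const, integral_mul_exp_mul_sub, sub_self, mul_zero,
      exp_zero]
  have hvar : ∫ s in t₀..t, (a * exp (a * (s - t))) • g s
      = a • (f t - exp (a * (t₀ - t)) • f t₀) := by
    simp_rw [mul_smul]
    rw [intervalIntegral.integral_smul, integral_exp_smul_eq_of_hasDerivAt hf hg]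
  have hint : IntervalIntegrable (fun s => (a * exp (a * (s - t))) • g s) volume t₀ t :=
    hg.continuousOn_smul (f := fun s => a * exp (a * (s - t))) (by fun_prop)
  simp_rw [smul_sub]
  rw [intervalIntegral.integral_sub (Continuous.intervalIntegrable (by fun_prop) _ _) hint, hconst,
    hvar]
  module

theorem norm_neg_smul_add_le {f g : ℝ → E} {a t₀ t δ M ε : ℝ} (ha : 0 ≤ a) (hδ : 0 ≤ δ)
    (hδt : t₀ + δ ≤ t) (hf : ∀ s ∈ Icc t₀ t, HasDerivAt f (-a • f s + g s) s)
    (hg : ContinuousOn g (Icc t₀ t)) (hM : ∀ s ∈ Icc t₀ t, ‖g s‖ ≤ M)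
    (hε : ∀ s ∈ Icc (t - δ) t, ‖g t - g s‖ ≤ ε) :
    ‖-a • f t + g t‖ ≤ ε + (‖f t₀‖ * a + 3 * M) * exp (-δ * a) := by
  have ht : t₀ ≤ t := by linarith
  have hgt : ‖g t‖ ≤ M := hM t ⟨ht, le_rfl⟩
  have hg' := hg.intervalIntegrable_of_Icc (μ := volume) ht
  rw [neg_smul_add_eq_integral_add (by rwa [uIcc_of_le ht]) hg']
  have hint := norm_integral_exp_kernel_smul_le_of_split (C := 2 * M) ha
    (by linarith : t₀ ≤ t - δ) (by linarith : t - δ ≤ t)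
    (intervalIntegrable_const.sub hg' : IntervalIntegrable (fun s => g t - g s) volume t₀ t)
    (fun s hs => (norm_sub_le _ _).trans (by linarith [hM s ⟨hs.1, hs.2.trans (by linarith)⟩])) hε
  have hdecay : exp (a * (t₀ - t)) ≤ exp (-δ * a) := exp_le_exp.2 (by nlinarith)
  have hbdry : ‖exp (a * (t₀ - t)) • (g t - a • f t₀)‖ ≤ exp (-δ * a) * (M + a * ‖f t₀‖) := by
    rw [norm_smul, Real.norm_of_nonneg (exp_pos _).le]
    refine mul_le_mul hdecay ((norm_sub_le _ _).trans ?_) (norm_nonneg _) (exp_pos _).le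
    rw [norm_smul, Real.norm_of_nonneg ha]
    linarith
  rw [show a * (t - δ - t) = -δ * a by ring] at hint
  calc _ ≤ _ := norm_add_le _ _
    _ ≤ _ := add_le_add hint hbdry
    _ = _ := by ring

end LinearODE

lemma tendsto_mul_add_mul_exp_neg_mul_atTop {δ : ℝ} (hδ : 0 < δ) (K L : ℝ) :
    Tendsto (fun a => (K * a + L) * exp (-δ * a)) atTop (𝓝 0) := by
  have h := ((tendsto_rpow_mul_exp_neg_mul_atTop_nhds_zero 1 δ hδ).const_mul K).add
    ((tendsto_rpow_mul_exp_neg_mul_atTop_nhds_zero 0 δ hδ).const_mul L)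
  simp only [rpow_one, rpow_zero, mul_zero, add_zero] at h
  exact h.congr fun a => by ring

theorem stmt_8_general {n : ℕ} (t₀ : ℝ) (T : EReal)
    (ν : ℝ → EuclideanSpace ℝ (Fin n)) (Mb : ℝ)
    (hbound : ∀ t, t₀ ≤ t → (t : EReal) < T → ‖ν t‖ ≤ Mb)
    (hUC : ∀ ε > (0:ℝ), ∃ δ > (0:ℝ), ∀ s t : ℝ, t₀ ≤ s → (s : EReal) < T →
      t₀ ≤ t → (t : EReal) < T → |t - s| ≤ δ → ‖ν t - ν s‖ ≤ ε)
    (θ : ℝ → ℝ → EuclideanSpace ℝ (Fin n)) (θ₀ : EuclideanSpace ℝ (Fin n))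
    (hinit : ∀ a, θ a t₀ = θ₀)
    (hode : ∀ a, 0 < a → ∀ t, t₀ ≤ t → (t : EReal) < T →
      HasDerivAt (θ a) (-a • θ a t + ν t) t) :
    ∀ τ, t₀ < τ → (τ : EReal) < T → ∀ Δ > (0:ℝ), ∃ astar > (0:ℝ), ∀ a, astar ≤ a →
      ∀ t, τ ≤ t → (t : EReal) < T → ‖-a • θ a t + ν t‖ ≤ Δ := by
  intro τ hτ _ Δ hΔ
  obtain ⟨δ, hδ, hνδ⟩ := hUC (Δ / 2) (half_pos hΔ)
  obtain ⟨δ', hδ'0, hδ'δ, hδ'τ⟩ : ∃ δ', 0 < δ' ∧ δ' ≤ δ ∧ δ' ≤ τ - t₀ :=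
    ⟨min δ (τ - t₀), lt_min hδ (sub_pos.2 hτ), min_le_left _ _, min_le_right _ _⟩
  obtain ⟨A, hA⟩ := eventually_atTop.1 <|
    (tendsto_mul_add_mul_exp_neg_mul_atTop hδ'0 ‖θ₀‖ (3 * Mb)).eventually
      (ge_mem_nhds (half_pos hΔ))
  refine ⟨max A 1, by positivity, fun a ha t ht htT => ?_⟩
  have ha0 : 0 < a := one_pos.trans_le (le_of_max_le_right ha)
  have hlt : ∀ s ∈ Icc t₀ t, (s : EReal) < T := fun s hs =>
    (EReal.coe_le_coe_iff.2 hs.2).trans_lt htT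
  have hν : UniformContinuousOn ν {s | t₀ ≤ s ∧ (s : EReal) < T} := by
    refine Metric.uniformContinuousOn_iff_le.2 fun ε hε => ?_
    obtain ⟨d, hd, hνd⟩ := hUC ε hε
    refine ⟨d, hd, fun x hx y hy hxy => ?_⟩
    rw [dist_eq_norm]
    exact hνd y x hy.1 hy.2 hx.1 hx.2 (by rwa [Real.dist_eq] at hxy)
  have hnear : ∀ s ∈ Icc (t - δ') t, ‖ν t - ν s‖ ≤ Δ / 2 := fun s hs => by
    have hs0 : t₀ ≤ s := by linarith [hs.1]
    refine hνδ s t hs0 (hlt s ⟨hs0, hs.2⟩) (hs0.trans hs.2) htT ?_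
    rw [abs_of_nonneg (sub_nonneg.2 hs.2)]
    linarith [hs.1]
  calc ‖-a • θ a t + ν t‖ ≤ Δ / 2 + (‖θ₀‖ * a + 3 * Mb) * exp (-δ' * a) :=
        hinit a ▸ norm_neg_smul_add_le ha0.le hδ'0.le (by linarith)
          (fun s hs => hode a ha0 s hs.1 (hlt s hs))
          (hν.continuousOn.mono fun s hs => ⟨hs.1, hlt s hs⟩)
          (fun s hs => hbound s hs.1 (hlt s hs)) hnear
    _ ≤ Δ := by linarith [hA a (le_of_max_le_left ha)]

/-- Kalsi-type lemma: for `ϑ̇ = −aϑ + ν(t)` on `[t₀,T)` with `ν` bounded and uniformly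
continuous, the derivative `ϑ̇` becomes uniformly small on `[τ,T)` as `a → ∞`. -/
theorem stmt_8 {n : ℕ} (t₀ : ℝ) (T : EReal) (hT : (t₀ : EReal) < T)
    (ν : ℝ → EuclideanSpace ℝ (Fin n)) (Mb : ℝ)
    (hbound : ∀ t, t₀ ≤ t → (t : EReal) < T → ‖ν t‖ ≤ Mb)
    (hUC : ∀ ε > (0:ℝ), ∃ δ > (0:ℝ), ∀ s t : ℝ, t₀ ≤ s → (s : EReal) < T →
      t₀ ≤ t → (t : EReal) < T → |t - s| ≤ δ → ‖ν t - ν s‖ ≤ ε)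
    (θ : ℝ → ℝ → EuclideanSpace ℝ (Fin n)) (θ₀ : EuclideanSpace ℝ (Fin n))
    (hinit : ∀ a, θ a t₀ = θ₀)
    (hode : ∀ a, 0 < a → ∀ t, t₀ ≤ t → (t : EReal) < T →
      HasDerivAt (θ a) (-a • θ a t + ν t) t) :
    ∀ τ, t₀ < τ → (τ : EReal) < T → ∀ Δ > (0:ℝ), ∃ astar > (0:ℝ), ∀ a, astar ≤ a →
      ∀ t, τ ≤ t → (t : EReal) < T → ‖-a • θ a t + ν t‖ ≤ Δ :=
  stmt_8_general t₀ T ν Mb hbound hUC θ θ₀ hinit hode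
end
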